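/- arXiv:1804.05049 — 2 statements merged into one kernel-verified Lean document; each statement's English description precedes it below -/
import Mathlib

section
/- Let (s_j)_{j∈ℕ} and (t_j)_{j∈ℕ} be two sequences of positive real numbers such that the set of all finite nonnegative-integer combinations { ∑_{j=1}^n s_j k_j : k_j ∈ ℤ₊, n ∈ ℕ } equals the set { ∑_{j=1}^n t_j k_j : k_j ∈ ℤ₊, n ∈ ℕ }. If each of the two families (s_j) and (t_j) is linearly independent over the field ℚ, then the sets {s_j : j ∈ ℕ} and {t_j : j ∈ ℕ} are equal. -/
lemma comb_coeff_eq (s : ℕ → ℝ) (hlis : LinearIndependent ℚ s) (c : ℕ →₀ ℕ) (i : ℕ)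
    (h : (c.sum fun j n => (n : ℝ) * s j) = s i) : c = Finsupp.single i 1 := by
  have key : (c.mapRange (Nat.cast : ℕ → ℚ) Nat.cast_zero - Finsupp.single i 1) = 0 := by
    rw [linearIndependent_iff] at hlis
    apply hlis
    rw [map_sub]
    have h1 : Finsupp.linearCombination ℚ s (c.mapRange (Nat.cast : ℕ → ℚ) Nat.cast_zero)
        = c.sum fun j n => (n : ℝ) * s j := by
      rw [Finsupp.linearCombination_apply, Finsupp.sum_mapRange_index (by simp)]
      apply Finsupp.sum_congr
      intro j _
      simp [Rat.smul_def]
    rw [h1, h]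
    simp [Finsupp.linearCombination_apply, Finsupp.sum_single_index]
  have key2 : c.mapRange (Nat.cast : ℕ → ℚ) Nat.cast_zero = Finsupp.single i 1 :=
    sub_eq_zero.mp key
  ext j
  have := Finsupp.ext_iff.mp key2 j
  simp [Finsupp.mapRange_apply] at this
  by_cases hj : j = i
  · subst hj; simp at this ⊢; exact_mod_cast this
  · simp [Finsupp.single_apply, hj] at this ⊢; exact_mod_cast this

lemma range_subset_aux (s t : ℕ → ℝ)
    (h1 : {x : ℝ | ∃ k : ℕ →₀ ℕ, x = k.sum fun j n => (n : ℝ) * s j} ⊆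
          {x : ℝ | ∃ k : ℕ →₀ ℕ, x = k.sum fun j n => (n : ℝ) * t j})
    (h2 : {x : ℝ | ∃ k : ℕ →₀ ℕ, x = k.sum fun j n => (n : ℝ) * t j} ⊆
          {x : ℝ | ∃ k : ℕ →₀ ℕ, x = k.sum fun j n => (n : ℝ) * s j})
    (hlis : LinearIndependent ℚ s) : Set.range s ⊆ Set.range t := by
  rintro x ⟨i, rfl⟩
  -- s i is a t-combination
  have hsi : s i ∈ {x : ℝ | ∃ k : ℕ →₀ ℕ, x = k.sum fun j n => (n : ℝ) * s j} := by
    exact ⟨Finsupp.single i 1, by simp [Finsupp.sum_single_index]⟩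
  obtain ⟨k, hk⟩ := h1 hsi
  -- each t j is an s-combination
  have htj : ∀ j, ∃ m : ℕ →₀ ℕ, t j = m.sum fun l n => (n : ℝ) * s l := by
    intro j
    exact h2 ⟨Finsupp.single j 1, by simp [Finsupp.sum_single_index]⟩
  choose m hm using htj
  set c : ℕ →₀ ℕ := k.sum fun j n => n • m j with hc
  have hcsum : (c.sum fun l n => (n : ℝ) * s l) = s i := by
    rw [hc, Finsupp.sum_sum_index (by simp) (by intros; push_cast; ring)]
    rw [hk]
    apply Finsupp.sum_congr
    intro j _
    rw [Finsupp.sum_smul_index (by simp)]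
    rw [hm j, Finsupp.mul_sum]
    apply Finsupp.sum_congr
    intro l _
    push_cast
    ring
  have hcs : c = Finsupp.single i 1 := comb_coeff_eq s hlis c i hcsum
  -- c i = 1, c l = 0 for l ≠ i
  have capp : ∀ l, c l = ∑ j ∈ k.support, k j * (m j) l := by
    intro l
    rw [hc, Finsupp.sum_apply, Finsupp.sum]
    apply Finset.sum_congr rfl
    intro j _
    simp
  have hci : ∑ j ∈ k.support, k j * (m j) i = 1 := by
    rw [← capp, hcs]; simp
  -- get j₀ with nonzero term
  have hex : ∃ j₀ ∈ k.support, k j₀ * (m j₀) i ≠ 0 := by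
    by_contra hcon
    push_neg at hcon
    rw [Finset.sum_eq_zero hcon] at hci
    exact one_ne_zero hci.symm
  obtain ⟨j₀, hj₀mem, hj₀⟩ := hex
  have hle : k j₀ * (m j₀) i ≤ 1 := hci ▸ Finset.single_le_sum (f := fun j => k j * (m j) i) (fun _ _ => Nat.zero_le _) hj₀mem
  have heq1 : k j₀ * (m j₀) i = 1 := le_antisymm hle (Nat.one_le_iff_ne_zero.mpr hj₀)
  have hkj₀ : k j₀ = 1 := Nat.eq_one_of_mul_eq_one_right heq1
  have hmj₀i : (m j₀) i = 1 := Nat.eq_one_of_mul_eq_one_left heq1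
  have hmj₀l : ∀ l, l ≠ i → (m j₀) l = 0 := by
    intro l hl
    have h0 : ∑ j ∈ k.support, k j * (m j) l = 0 := by
      rw [← capp, hcs]; simp [Finsupp.single_apply, Ne.symm hl]
    have h3 := (Finset.sum_eq_zero_iff.mp h0) j₀ hj₀mem
    rw [hkj₀, one_mul] at h3
    exact h3
  have : m j₀ = Finsupp.single i 1 := by
    ext l
    by_cases hl : l = i
    · subst hl; simp [hmj₀i]
    · simp [Finsupp.single_apply, Ne.symm hl, hmj₀l l hl]
  refine ⟨j₀, ?_⟩
  rw [hm j₀, this, Finsupp.sum_single_index (by simp)]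
  simp

/-- If the sets of finite nonnegative-integer combinations of two sequences `(s j)` and
`(t j)` of positive reals coincide, and each family is linearly independent over `ℚ`,
then `{s j} = {t j}` as sets. -/
theorem range_eq_of_natCombos_eq (s t : ℕ → ℝ) (hs : ∀ j, 0 < s j) (ht : ∀ j, 0 < t j)
    (hsets : {x : ℝ | ∃ k : ℕ →₀ ℕ, x = k.sum fun j n => (n : ℝ) * s j} =
             {x : ℝ | ∃ k : ℕ →₀ ℕ, x = k.sum fun j n => (n : ℝ) * t j})
    (hlis : LinearIndependent ℚ s) (hlit : LinearIndependent ℚ t) :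
    Set.range s = Set.range t := by
  apply Set.Subset.antisymm
  · exact range_subset_aux s t hsets.le hsets.ge hlis
  · exact range_subset_aux t s hsets.ge hsets.le hlit
end

section
/- Let 𝓗 be a complex Hilbert space and let H ⊆ 𝓗 be a real-linear subspace such that ⟨x, y⟩ is real for all x, y ∈ H and every element of 𝓗 can be written as x + i·y with x, y ∈ H. Let A be a bounded self-adjoint (complex-linear) operator on 𝓗, and define the kernel K on H by K(x, y) = ⟨x, Ay⟩. Then K is positive definite — i.e., for every n, every c : {1,...,n} → ℂ and every x : {1,...,n} → H, the number ∑_{j,k} conj(c_j)·c_k·K(x_j, x_k) is a nonnegative real — if and only if A is a positive operator, i.e., ⟨z, Az⟩ ≥ 0 for every z ∈ 𝓗. -/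
open scoped InnerProductSpace ComplexOrder

/-- Let `𝓗` be a complex Hilbert space and `H ⊆ 𝓗` a completely real subspace with
`𝓗 = H + iH`. For a bounded self-adjoint operator `A` on `𝓗`, the kernel
`K(x, y) = ⟨x, A y⟩` on `H` is positive definite if and only if `A` is a positive
operator. -/
theorem kernel_posDef_iff_operator_positive {E : Type*}
    [NormedAddCommGroup E] [InnerProductSpace ℂ E] [CompleteSpace E]
    (H : Submodule ℝ E)
    (hreal : ∀ x ∈ H, ∀ y ∈ H, (⟪x, y⟫_ℂ).im = 0)
    (hspan : ∀ z : E, ∃ x ∈ H, ∃ y ∈ H, z = x + Complex.I • y)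
    (A : E →L[ℂ] E) (hA : IsSelfAdjoint A) :
    (∀ (n : ℕ) (c : Fin n → ℂ) (x : Fin n → E), (∀ j, x j ∈ H) →
        0 ≤ ∑ j, ∑ k, (starRingEnd ℂ) (c j) * c k * ⟪x j, A (x k)⟫_ℂ) ↔
      ∀ z : E, 0 ≤ ⟪z, A z⟫_ℂ := by
  have key : ∀ (n : ℕ) (c : Fin n → ℂ) (x : Fin n → E),
      ∑ j, ∑ k, (starRingEnd ℂ) (c j) * c k * ⟪x j, A (x k)⟫_ℂ
        = ⟪∑ j, c j • x j, A (∑ k, c k • x k)⟫_ℂ := by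
    intro n c x
    simp [map_sum, inner_sum, sum_inner, inner_smul_left, inner_smul_right,
      Finset.mul_sum, mul_assoc]
    rw [Finset.sum_comm]
    exact Finset.sum_congr rfl fun _ _ => Finset.sum_congr rfl fun _ _ => by ring
  constructor
  · intro h z
    obtain ⟨x, hx, y, hy, rfl⟩ := hspan z
    have := h 2 ![1, Complex.I] ![x, y] (by
      intro j; fin_cases j <;> simpa [hx, hy])
    rw [key] at this
    simpa [Fin.sum_univ_two] using this
  · intro h n c x _
    rw [key]
    exact h _
end
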